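/- If f ∈ g* (g = strictly upper triangular n×n matrices) and (r,s) ∈ Supp(f), then dim g/g^f ≥ 2(s − r − 1). -/

import Mathlib

/-!
For `r < k < s` the matrix units `E_{rk}` and `E_{ks}` pair under `(x, y) ↦ f([x, y])` to
`±f(E_{rs}) ≠ 0`, while any two such units not paired in this way have vanishing bracket
pairing. So the `2(s - r - 1)` functionals `x ↦ f([x, y])`, with `y` running over these units,
vanish on `g^f` and restrict to a surjection `g → ℂ^{2(s-r-1)}`; rank–nullity gives the bound.
-/

open Matrix

/-- `g`: the span of the matrix units `E_{rs}`, `r < s`, i.e. the strictly upper triangular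
`n × n` complex matrices. -/
noncomputable def gUpper (n : ℕ) : Submodule ℂ (Matrix (Fin n) (Fin n) ℂ) :=
  Submodule.span ℂ
    {m | ∃ r s : Fin n, r < s ∧ m = Matrix.single r s (1 : ℂ)}

open Module

theorem finrank_add_card_le_of_biorthogonal {K M ι : Type*} [DivisionRing K] [AddCommGroup M]
    [Module K M] [Fintype ι] {g W : Submodule K M} [FiniteDimensional K g]
    (φ : ι → M →ₗ[K] K) (e : ι → M) (he : ∀ i, e i ∈ g) (hdiag : ∀ i, φ i (e i) ≠ 0)
    (hoff : ∀ i j, i ≠ j → φ j (e i) = 0) (hWg : W ≤ g) (hWφ : ∀ x ∈ W, ∀ j, φ j x = 0) :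
    finrank K W + Fintype.card ι ≤ finrank K g := by
  set Φ : g →ₗ[K] ι → K := (LinearMap.pi φ).domRestrict g
  have hsurj : Function.Surjective Φ := by
    intro v
    refine ⟨∑ i, (v i / φ i (e i)) • ⟨e i, he i⟩, funext fun j => ?_⟩
    simp only [map_sum, map_smul, Finset.sum_apply, Pi.smul_apply, smul_eq_mul]
    rw [Finset.sum_eq_single j]
    · simp [Φ, div_mul_cancel₀ _ (hdiag j)]
    · intro i _ hij; simp [Φ, hoff i j hij]
    · simp
  have hker : W.comap g.subtype ≤ LinearMap.ker Φ := fun x hx => funext fun j => hWφ _ hx j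
  calc finrank K W + Fintype.card ι
      = finrank K (W.comap g.subtype) + finrank K (LinearMap.range Φ) := by
        rw [(Submodule.comapSubtypeEquivOfLe hWg).finrank_eq, LinearMap.range_eq_top.mpr hsurj,
          finrank_top, finrank_fintype_fun_eq_card]
    _ ≤ finrank K (LinearMap.ker Φ) + finrank K (LinearMap.range Φ) := by
        gcongr; exact Submodule.finrank_mono hker
    _ = finrank K g := by rw [add_comm, LinearMap.finrank_range_add_finrank_ker]

noncomputable def bracketFunctional {K A : Type*} [CommSemiring K] [Ring A] [Algebra K A]
    (f : A →ₗ[K] K) (y : A) : A →ₗ[K] K :=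
  f ∘ₗ (LinearMap.mulRight K y - LinearMap.mulLeft K y)

@[simp]
theorem bracketFunctional_apply {K A : Type*} [CommSemiring K] [Ring A] [Algebra K A]
    (f : A →ₗ[K] K) (x y : A) : bracketFunctional f y x = f (x * y - y * x) :=
  rfl

section PathUnit

variable {n : ℕ} (r s : Fin n)

noncomputable def pathUnit : Finset.Ioo r s ⊕ Finset.Ioo r s → Matrix (Fin n) (Fin n) ℂ :=
  Sum.elim (fun k => single r k 1) (fun k => single k s 1)

variable {r s}

theorem single_mem_gUpper {a b : Fin n} (h : a < b) : single a b (1 : ℂ) ∈ gUpper n :=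
  Submodule.subset_span ⟨a, b, h, rfl⟩

theorem pathUnit_mem_gUpper (i : Finset.Ioo r s ⊕ Finset.Ioo r s) :
    pathUnit r s i ∈ gUpper n := by
  rcases i with ⟨k, hk⟩ | ⟨k, hk⟩ <;> rw [Finset.mem_Ioo] at hk
  · exact single_mem_gUpper hk.1
  · exact single_mem_gUpper hk.2

theorem pathUnit_commutator_swap_self (hrs : r < s) (i : Finset.Ioo r s ⊕ Finset.Ioo r s) :
    pathUnit r s i * pathUnit r s i.swap - pathUnit r s i.swap * pathUnit r s i =
        single r s 1 ∨
      pathUnit r s i * pathUnit r s i.swap - pathUnit r s i.swap * pathUnit r s i =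
        -single r s 1 := by
  rcases i with k | k
  · left; simp [pathUnit, hrs.ne']
  · right; simp [pathUnit, hrs.ne']

theorem pathUnit_commutator_swap_of_ne (hrs : r < s) {i j : Finset.Ioo r s ⊕ Finset.Ioo r s}
    (hij : i ≠ j) :
    pathUnit r s i * pathUnit r s j.swap - pathUnit r s j.swap * pathUnit r s i = 0 := by
  rcases i with ⟨k, hk⟩ | ⟨k, hk⟩ <;> rcases j with ⟨l, hl⟩ | ⟨l, hl⟩ <;>
    rw [Finset.mem_Ioo] at hk hl <;>
    simp_all [pathUnit, hrs.ne', hk.1.ne', hk.2.ne', hl.1.ne', hl.2.ne', eq_comm (a := l)]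

end PathUnit

/-- Let `g` be the strictly upper triangular matrices, `f ∈ g*`, and
`g^f = {x ∈ g : f([x,y]) = 0 ∀ y ∈ g}`.  If `(r,s) ∈ Supp(f)`, i.e. `r < s` and
`f(E_{rs}) ≠ 0`, then `dim g/g^f ≥ 2(s − r − 1)`. -/
theorem stmt9 (n : ℕ) (f : Matrix (Fin n) (Fin n) ℂ →ₗ[ℂ] ℂ)
    (W : Submodule ℂ (Matrix (Fin n) (Fin n) ℂ))
    (hW : (W : Set (Matrix (Fin n) (Fin n) ℂ)) =
      {x | x ∈ gUpper n ∧ ∀ y ∈ gUpper n, f (x * y - y * x) = 0})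
    (r s : Fin n) (hrs : r < s) (hsupp : f (Matrix.single r s (1 : ℂ)) ≠ 0) :
    Module.finrank ℂ W + 2 * ((s : ℕ) - (r : ℕ) - 1) ≤ Module.finrank ℂ (gUpper n) := by
  have hWf : ∀ x ∈ W, x ∈ gUpper n ∧ ∀ y ∈ gUpper n, f (x * y - y * x) = 0 := fun x hx => by
    rwa [← SetLike.mem_coe, hW] at hx
  have hcard : Fintype.card (Finset.Ioo r s ⊕ Finset.Ioo r s) = 2 * ((s : ℕ) - (r : ℕ) - 1) := by
    rw [Fintype.card_sum, Fintype.card_coe, Fin.card_Ioo, two_mul]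
  rw [← hcard]
  refine finrank_add_card_le_of_biorthogonal (fun j => bracketFunctional f (pathUnit r s j.swap))
    (pathUnit r s) pathUnit_mem_gUpper (fun i => ?_) (fun i j hij => ?_)
    (fun x hx => (hWf x hx).1) (fun x hx j => (hWf x hx).2 _ (pathUnit_mem_gUpper _))
  · rcases pathUnit_commutator_swap_self hrs i with h | h <;> simp [h, hsupp]
  · simp [pathUnit_commutator_swap_of_ne hrs hij]
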